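/- Let F ⊂ ℂ be a finite set and let u : ℂ∖F → ℝ be subharmonic and bounded (i.e., sup_{ℂ∖F} |u| < ∞). Then u is constant. -/

import Mathlib

/-!
`u` attains its supremum over `ℂ \ F`. Indeed, let `x` maximise `u` on the compact set `K`
obtained from a large closed disc by removing small open discs around the punctures. A point
outside `K` lies in a punctured disc around some `p ∈ F` or outside the large disc. There the
maximum principle on annuli, applied to `u + ε log |z - p|`, bounds `u` by its values on the
circle that belongs to `K`: since `u` is bounded, the logarithmic term dominates it at the
puncture (resp. near `∞`, with `ε < 0`), and letting `ε → 0` gives `u ≤ u x`. As `ℂ \ F` is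
connected, the strong maximum principle then forces `u ≡ u x`.
-/

open MeasureTheory

/-- `u` is subharmonic on `U`: it is upper semicontinuous on `U` and satisfies the
sub-mean value inequality on all sufficiently small circles around each point of `U`. -/
def SubharmonicOn (u : ℂ → ℝ) (U : Set ℂ) : Prop :=
  UpperSemicontinuousOn u U ∧
  ∀ z ∈ U, ∃ r₀ > (0 : ℝ), ∀ r : ℝ, 0 < r → r < r₀ →
    Metric.closedBall z r ⊆ U ∧
    u z ≤ (1 / (2 * Real.pi)) *
      ∫ t in (0 : ℝ)..(2 * Real.pi), u (z + (r : ℂ) * Complex.exp ((t : ℂ) * Complex.I))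

open Metric Set Filter Topology Real InnerProductSpace

theorem UpperSemicontinuousOn.upperSemicontinuousAt {α β : Type*} [TopologicalSpace α]
    [Preorder β] {f : α → β} {s : Set α} {x : α} (hf : UpperSemicontinuousOn f s)
    (hs : s ∈ 𝓝 x) : UpperSemicontinuousAt f x := by
  intro y hy
  simpa only [nhdsWithin_eq_nhds.2 hs] using hf x (mem_of_mem_nhds hs) y hy

theorem UpperSemicontinuousOn.le_of_mem_closure {α β : Type*} [TopologicalSpace α]
    [LinearOrder β] {f : α → β} {s t : Set α} {x : α} {c : β}
    (hf : UpperSemicontinuousOn f s) (hts : t ⊆ s) (hx : x ∈ s) (hxt : x ∈ closure t)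
    (hc : ∀ y ∈ t, c ≤ f y) : c ≤ f x := by
  by_contra! hlt
  have : (𝓝[t] x).NeBot := mem_closure_iff_nhdsWithin_neBot.1 hxt
  obtain ⟨y, hy, hyt⟩ := ((hf x hx c hlt).filter_mono (nhdsWithin_mono x hts)
    |>.and self_mem_nhdsWithin).exists
  exact (hc y hyt).not_gt hy

theorem subharmonicOn_iff {u : ℂ → ℝ} {U : Set ℂ} :
    SubharmonicOn u U ↔ UpperSemicontinuousOn u U ∧ ∀ z ∈ U, ∃ r₀ > (0 : ℝ), ∀ r : ℝ,
      0 < r → r < r₀ → closedBall z r ⊆ U ∧ u z ≤ circleAverage u z r := by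
  simp only [SubharmonicOn, circleAverage_def, smul_eq_mul, one_div, circleMap]

theorem circleIntegrable_of_upperSemicontinuousAt {f : ℂ → ℝ} {c : ℂ} {R C : ℝ}
    (husc : ∀ w ∈ sphere c |R|, UpperSemicontinuousAt f w)
    (hbd : ∀ w ∈ sphere c |R|, |f w| ≤ C) : CircleIntegrable f c R := by
  have hg : UpperSemicontinuous (fun θ => f (circleMap c R θ)) := fun θ =>
    (husc _ (circleMap_mem_sphere' c R θ)).comp (continuous_circleMap c R).continuousAt
  refine (intervalIntegrable_iff_integrableOn_Ioc_of_le two_pi_pos.le).2 <|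
    Measure.integrableOn_of_bounded measure_Ioc_lt_top.ne hg.measurable.aestronglyMeasurable
      (M := C) (ae_of_all _ fun θ => ?_)
  exact hbd _ (circleMap_mem_sphere' c R θ)

theorem circleAverage_lt_of_upperSemicontinuousAt {f : ℂ → ℝ} {c : ℂ} {R a : ℝ}
    (hf : CircleIntegrable f c R) (husc : ∀ w ∈ sphere c |R|, UpperSemicontinuousAt f w)
    (hle : ∀ w ∈ sphere c |R|, f w ≤ a) {w : ℂ} (hw : w ∈ sphere c |R|) (hlt : f w < a) :
    circleAverage f c R < a := by
  set g : ℝ → ℝ := fun θ => f (circleMap c R θ)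
  have hg : UpperSemicontinuous g := fun θ =>
    (husc _ (circleMap_mem_sphere' c R θ)).comp (continuous_circleMap c R).continuousAt
  obtain ⟨θ₀, rfl⟩ : w ∈ range (circleMap c R) := by rwa [range_circleMap]
  obtain ⟨θ₁, hθ₁, hθ₀₁⟩ := (periodic_circleMap c R).exists_mem_Ico₀ two_pi_pos θ₀
  have hθ₁cl : θ₁ ∈ closure (Ioo 0 (2 * π)) := by
    rw [closure_Ioo two_pi_pos.ne]; exact Ico_subset_Icc_self hθ₁
  obtain ⟨θ, hθlt, hθ⟩ := mem_closure_iff.1 hθ₁cl _ (hg.isOpen_preimage a)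
    (show g θ₁ < a by simpa [g, ← hθ₀₁] using hlt)
  have hpos : volume.restrict (Ioc 0 (2 * π)) {θ | g θ < a} ≠ 0 := by
    rw [Measure.restrict_apply' measurableSet_Ioc]
    exact mt (measure_mono_null (inter_subset_inter_right _ Ioo_subset_Ioc_self))
      (((hg.isOpen_preimage a).inter isOpen_Ioo).measure_ne_zero volume ⟨θ, hθlt, hθ⟩)
  have hint := intervalIntegral.integral_lt_integral_of_ae_le_of_measure_setOfPred_lt_ne_zero
    two_pi_pos.le hf intervalIntegrable_const
    (ae_of_all _ fun θ => hle _ (circleMap_mem_sphere' c R θ)) hpos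
  rw [intervalIntegral.integral_const, sub_zero, smul_eq_mul] at hint
  rw [circleAverage_def, smul_eq_mul, inv_mul_lt_iff₀ two_pi_pos]
  exact hint

theorem harmonicOnNhd_log_dist (p : ℂ) : HarmonicOnNhd (fun w => log (dist w p)) {p}ᶜ :=
  fun w hw => by
    simp_rw [dist_eq_norm]
    exact (analyticAt_id.sub analyticAt_const).harmonicAt_log_norm (sub_ne_zero.2 hw)

theorem le_of_forall_pos_le_add_mul {a b K : ℝ} (h : ∀ ε > 0, a ≤ b + ε * K) : a ≤ b := by
  have hlim : Tendsto (fun ε => b + ε * K) (𝓝[>] 0) (𝓝 b) :=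
    ((continuous_const.add (continuous_id.mul continuous_const)).tendsto' 0 b
      (by simp)).mono_left nhdsWithin_le_nhds
  exact ge_of_tendsto hlim (eventually_mem_nhdsWithin.mono h)

section Subharmonic

variable {u : ℂ → ℝ} {U : Set ℂ} {C : ℝ} {z : ℂ}

-- The bounds `|u| ≤ C` below make the circle averages of `u` genuine integrals: the Bochner
-- integral of a non-integrable function is `0`.

theorem SubharmonicOn.upperSemicontinuousAt (h : SubharmonicOn u U) (hU : IsOpen U)
    (hz : z ∈ U) : UpperSemicontinuousAt u z :=
  h.1.upperSemicontinuousAt (hU.mem_nhds hz)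

theorem SubharmonicOn.circleIntegrable (h : SubharmonicOn u U) (hU : IsOpen U)
    (hbd : ∀ w ∈ U, |u w| ≤ C) {r : ℝ} (hs : sphere z |r| ⊆ U) : CircleIntegrable u z r :=
  circleIntegrable_of_upperSemicontinuousAt (fun _ hw => h.upperSemicontinuousAt hU (hs hw))
    fun w hw => hbd w (hs hw)

theorem SubharmonicOn.mono {V : Set ℂ} (h : SubharmonicOn u U) (hV : IsOpen V) (hVU : V ⊆ U) :
    SubharmonicOn u V := by
  rw [subharmonicOn_iff] at h ⊢
  refine ⟨h.1.mono hVU, fun z hz => ?_⟩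
  obtain ⟨r₀, hr₀, hmean⟩ := h.2 z (hVU hz)
  obtain ⟨ε, hε, hball⟩ := Metric.isOpen_iff.1 hV z hz
  refine ⟨min r₀ ε, lt_min hr₀ hε, fun r hr hrlt => ⟨?_, (hmean r hr ?_).2⟩⟩
  · exact (closedBall_subset_ball (hrlt.trans_le (min_le_right _ _))).trans hball
  · exact hrlt.trans_le (min_le_left _ _)

theorem SubharmonicOn.add_harmonicOnNhd (h : SubharmonicOn u U) (hU : IsOpen U)
    (hbd : ∀ w ∈ U, |u w| ≤ C) {v : ℂ → ℝ} (hv : HarmonicOnNhd v U) :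
    SubharmonicOn (fun w => u w + v w) U := by
  have hmean := (subharmonicOn_iff.1 h).2
  refine subharmonicOn_iff.2 ⟨h.1.add hv.continuousOn.upperSemicontinuousOn, fun z hz => ?_⟩
  obtain ⟨r₀, hr₀, hmean⟩ := hmean z hz
  refine ⟨r₀, hr₀, fun r hr hrlt => ?_⟩
  obtain ⟨hball, hle⟩ := hmean r hr hrlt
  have hball' : closedBall z |r| ⊆ U := by rwa [abs_of_pos hr]
  have hsph := sphere_subset_closedBall.trans hball'
  refine ⟨hball, ?_⟩
  rw [circleAverage_fun_add (h.circleIntegrable hU hbd hsph)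
    ((hv.continuousOn.mono hsph).circleIntegrable'), (hv.mono hball').circleAverage_eq]
  linarith

theorem SubharmonicOn.eventually_eq_of_isMaxOn (h : SubharmonicOn u U) (hU : IsOpen U)
    (hbd : ∀ w ∈ U, |u w| ≤ C) (hz : z ∈ U) (hmax : IsMaxOn u U z) :
    ∀ᶠ w in 𝓝 z, u w = u z := by
  obtain ⟨r₀, hr₀, hmean⟩ := (subharmonicOn_iff.1 h).2 z hz
  filter_upwards [ball_mem_nhds z hr₀] with w hw
  rcases eq_or_ne w z with rfl | hwz
  · rfl
  obtain ⟨hball, hle⟩ := hmean (dist w z) (dist_pos.2 hwz) hw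
  have hw' : w ∈ sphere z |dist w z| := by rw [mem_sphere, abs_of_nonneg dist_nonneg]
  have hsph : sphere z |dist w z| ⊆ U := by
    rw [abs_of_nonneg dist_nonneg]; exact sphere_subset_closedBall.trans hball
  refine le_antisymm (hmax (hsph hw')) (not_lt.1 fun hlt => hle.not_gt ?_)
  exact circleAverage_lt_of_upperSemicontinuousAt (h.circleIntegrable hU hbd hsph)
    (fun y hy => h.upperSemicontinuousAt hU (hsph hy)) (fun y hy => hmax (hsph hy)) hw' hlt

theorem SubharmonicOn.eq_of_isMaxOn (h : SubharmonicOn u U) (hU : IsOpen U)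
    (hUc : IsPreconnected U) (hbd : ∀ w ∈ U, |u w| ≤ C) {x : ℂ} (hx : x ∈ U)
    (hmax : IsMaxOn u U x) : ∀ z ∈ U, u z = u x := by
  set E : Set ℂ := {w | u w = u x}
  have hinterior : ∀ z ∈ U, u z = u x → z ∈ interior E := fun z hz heq => by
    rw [mem_interior_iff_mem_nhds]
    filter_upwards [h.eventually_eq_of_isMaxOn hU hbd hz fun y hy => (hmax hy).trans heq.ge]
      with w hw
    exact hw.trans heq
  have hlt_open : IsOpen (U ∩ {w | u w < u x}) := isOpen_iff_mem_nhds.2 fun z hz =>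
    inter_mem (hU.mem_nhds hz.1) (h.upperSemicontinuousAt hU hz.1 _ hz.2)
  have hcover : U ⊆ interior E ∪ (U ∩ {w | u w < u x}) := fun z hz =>
    (hmax hz : u z ≤ u x).eq_or_lt.imp (hinterior z hz) fun hlt => ⟨hz, hlt⟩
  have hdisj : Disjoint (interior E) (U ∩ {w | u w < u x}) :=
    disjoint_left.2 fun z heq hlt => (interior_subset (s := E) heq).not_lt hlt.2
  exact fun z hz => interior_subset (s := E) <| hUc.subset_left_of_subset_union isOpen_interior
    hlt_open hdisj hcover ⟨x, hx, hinterior x hx rfl⟩ hz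

theorem SubharmonicOn.exists_mem_frontier_le {A : Set ℂ} (h : SubharmonicOn u A)
    (hA : IsOpen A) (hAb : Bornology.IsBounded A) (husc : UpperSemicontinuousOn u (closure A))
    (hbd : ∀ w ∈ A, |u w| ≤ C) (hz : z ∈ A) : ∃ y ∈ frontier A, u z ≤ u y := by
  obtain ⟨x, hx, hmax⟩ := husc.exists_isMaxOn ⟨z, subset_closure hz⟩ hAb.isCompact_closure
  suffices ∃ y ∈ frontier A, u x ≤ u y from
    this.imp fun y hy => ⟨hy.1, (hmax (subset_closure hz)).trans hy.2⟩
  by_cases hxA : x ∈ A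
  swap
  · exact ⟨x, hA.frontier_eq ▸ ⟨hx, hxA⟩, le_rfl⟩
  set V := connectedComponentIn A x
  have hVA : V ⊆ A := connectedComponentIn_subset A x
  have hV : IsOpen V := hA.connectedComponentIn
  have hxV : x ∈ V := mem_connectedComponentIn hxA
  have hconst : ∀ w ∈ V, u w = u x :=
    (h.mono hV hVA).eq_of_isMaxOn hV isPreconnected_connectedComponentIn
      (fun w hw => hbd w (hVA hw)) hxV (hmax.on_subset (hVA.trans subset_closure))
  obtain ⟨y, hy⟩ : (frontier V).Nonempty := nonempty_frontier_iff.2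
    ⟨⟨x, hxV⟩, fun hVuniv => NormedSpace.unbounded_univ ℝ ℂ (hVuniv ▸ hAb.subset hVA)⟩
  have hyV : y ∈ closure V := frontier_subset_closure hy
  have hyA : y ∉ A := fun hyA => (hV.frontier_eq ▸ hy).2 <|
    (isPreconnected_connectedComponentIn.subset_closure (subset_insert y V)
      (insert_subset hyV subset_closure)).subset_connectedComponentIn
      (mem_insert_of_mem y hxV) (insert_subset hyA hVA) (mem_insert y V)
  have hyA' : y ∈ closure A := closure_mono hVA hyV
  exact ⟨y, hA.frontier_eq ▸ ⟨hyA', hyA⟩,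
    husc.le_of_mem_closure (hVA.trans subset_closure) hyA' hyV fun w hw => (hconst w hw).ge⟩

theorem SubharmonicOn.exists_mem_frontier_add_le (h : SubharmonicOn u U)
    (hbd : ∀ w ∈ U, |u w| ≤ C) {A : Set ℂ} (hA : IsOpen A) (hAb : Bornology.IsBounded A)
    (hAU : closure A ⊆ U) {v : ℂ → ℝ} (hv : HarmonicOnNhd v (closure A)) (hz : z ∈ A) :
    ∃ y ∈ frontier A, u z + v z ≤ u y + v y := by
  obtain ⟨C', hC'⟩ := hAb.isCompact_closure.exists_bound_of_continuousOn hv.continuousOn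
  have hsub := (h.mono hA (subset_closure.trans hAU)).add_harmonicOnNhd hA
    (fun w hw => hbd w (hAU (subset_closure hw))) (hv.mono subset_closure)
  refine hsub.exists_mem_frontier_le hA hAb
    ((h.1.mono hAU).add hv.continuousOn.upperSemicontinuousOn) (C := C + C') (fun w hw => ?_) hz
  calc |u w + v w| ≤ |u w| + |v w| := abs_add_le _ _
    _ ≤ C + C' := add_le_add (hbd w (hAU (subset_closure hw))) (hC' w (subset_closure hw))

theorem SubharmonicOn.add_mul_log_dist_le_max (h : SubharmonicOn u U)
    (hbd : ∀ w ∈ U, |u w| ≤ C) {p : ℂ} {r₁ r₂ B₁ B₂ : ℝ} (hr₁ : 0 < r₁)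
    (hann : closedBall p r₂ \ ball p r₁ ⊆ U) (h₁ : ∀ w ∈ sphere p r₁, u w ≤ B₁)
    (h₂ : ∀ w ∈ sphere p r₂, u w ≤ B₂) (ε : ℝ) (hz : z ∈ ball p r₂ \ closedBall p r₁) :
    u z + ε * log (dist z p) ≤ max (B₁ + ε * log r₁) (B₂ + ε * log r₂) := by
  set A := ball p r₂ \ closedBall p r₁
  have hA : IsOpen A := isOpen_ball.sdiff isClosed_closedBall
  have hclA : closure A ⊆ closedBall p r₂ \ ball p r₁ :=
    closure_minimal (sdiff_subset_sdiff ball_subset_closedBall ball_subset_closedBall)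
      (isClosed_closedBall.sdiff isOpen_ball)
  have hfr : frontier A ⊆ sphere p r₁ ∪ sphere p r₂ := fun y hy => by
    rw [hA.frontier_eq] at hy
    have hycl := hclA hy.1
    simp only [A, Set.mem_sdiff, mem_ball, mem_closedBall, not_and, not_le, not_lt, mem_union,
      mem_sphere] at hy hycl ⊢
    rcases hycl.2.eq_or_lt with h | h
    · exact Or.inl h.symm
    · exact Or.inr (le_antisymm hycl.1 (not_lt.1 fun h' => not_lt.2 (hy.2 h') h))
  have hp : closure A ⊆ {p}ᶜ := fun w hw hwp => (hclA hw).2 (hwp ▸ mem_ball_self hr₁)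
  have hv := ((harmonicOnNhd_log_dist p).const_smul (c := ε)).mono hp
  obtain ⟨y, hy, hle⟩ := h.exists_mem_frontier_add_le hbd hA (isBounded_ball.subset sdiff_subset)
    (hclA.trans hann) hv hz
  refine hle.trans ?_
  rcases hfr hy with hy | hy <;> rw [mem_sphere] at hy <;>
    simp only [Pi.smul_apply, smul_eq_mul, hy]
  · exact le_max_of_le_left (by linarith [h₁ y (mem_sphere.2 hy)])
  · exact le_max_of_le_right (by linarith [h₂ y (mem_sphere.2 hy)])

theorem SubharmonicOn.le_of_forall_sphere_le_of_mem_ball (h : SubharmonicOn u U)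
    (hbd : ∀ w ∈ U, |u w| ≤ C) {p : ℂ} {R B : ℝ} (hpU : closedBall p R \ {p} ⊆ U)
    (hB : ∀ w ∈ sphere p R, u w ≤ B) (hz : z ∈ ball p R \ {p}) : u z ≤ B := by
  have hd : 0 < dist z p := dist_pos.2 hz.2
  refine le_of_forall_pos_le_add_mul (K := log R - log (dist z p)) fun ε hε => ?_
  -- `δ` so small that `ε log δ` outweighs the bound `C` of `u` on the inner circle
  obtain ⟨δ, ⟨hδz, hδlog⟩, hδ⟩ := ((eventually_of_mem (Ioo_mem_nhdsGT hd) fun _ hδ => hδ.2).and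
    (tendsto_log_nhdsGT_zero.eventually_le_atBot ((B + ε * log R - C) / ε))
    |>.and self_mem_nhdsWithin).exists
  have hann : closedBall p R \ ball p δ ⊆ U :=
    (sdiff_subset_sdiff_right (singleton_subset_iff.2 (mem_ball_self hδ))).trans hpU
  have hδR : δ ≤ R := (hδz.trans (mem_ball.1 hz.1)).le
  have hC : ∀ w ∈ sphere p δ, u w ≤ C := fun w hw => (abs_le.1 (hbd w (hann
    ⟨closedBall_subset_closedBall hδR (sphere_subset_closedBall hw),
      sphere_disjoint_ball.notMem_of_mem_left hw⟩))).2
  have hmax := h.add_mul_log_dist_le_max hbd hδ hann hC hB ε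
    ⟨hz.1, fun hz' => (mem_closedBall.1 hz').not_gt hδz⟩
  rw [le_div_iff₀ hε] at hδlog
  rw [max_eq_right (by linarith)] at hmax
  linarith

theorem SubharmonicOn.le_of_forall_sphere_le_of_notMem_closedBall (h : SubharmonicOn u U)
    (hbd : ∀ w ∈ U, |u w| ≤ C) {p : ℂ} {R B : ℝ} (hR : 0 < R) (hpU : (ball p R)ᶜ ⊆ U)
    (hB : ∀ w ∈ sphere p R, u w ≤ B) (hz : z ∉ closedBall p R) : u z ≤ B := by
  refine le_of_forall_pos_le_add_mul (K := log (dist z p) - log R) fun ε hε => ?_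
  -- `S` so large that `-ε log S` outweighs the bound `C` of `u` on the outer circle
  obtain ⟨S, hSz, hSlog⟩ := ((eventually_gt_atTop (dist z p)).and
    (tendsto_log_atTop.eventually_ge_atTop ((C - B + ε * log R) / ε))).exists
  have hann : closedBall p S \ ball p R ⊆ U := fun w hw => hpU hw.2
  have hSR : R ≤ S := (lt_of_not_ge fun h => hz (mem_closedBall.2 h)).le.trans hSz.le
  have hC : ∀ w ∈ sphere p S, u w ≤ C := fun w hw => (abs_le.1 (hbd w (hpU
    fun hw' => (mem_ball.1 hw').not_ge (mem_sphere.1 hw ▸ hSR)))).2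
  have hmax := h.add_mul_log_dist_le_max hbd hR hann hB hC (-ε) ⟨mem_ball.2 hSz, hz⟩
  rw [div_le_iff₀ hε] at hSlog
  rw [max_eq_left (by linarith)] at hmax
  linarith

end Subharmonic

theorem Finset.exists_pos_forall_two_mul_lt_dist {α : Type*} [MetricSpace α] (F : Finset α) :
    ∃ ρ > 0, ∀ p ∈ F, ∀ q ∈ F, p ≠ q → 2 * ρ < dist p q := by
  have hsmall : ∀ᶠ ρ in 𝓝 (0 : ℝ), ∀ p ∈ F, ∀ q ∈ F, p ≠ q → 2 * ρ < dist p q := by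
    simp only [eventually_all_finset, eventually_imp_distrib_left]
    intro p _ q _ hpq
    exact ((continuous_const.mul continuous_id).tendsto' 0 0 (by simp)).eventually
      (gt_mem_nhds (dist_pos.2 hpq))
  obtain ⟨ρ, hρ, hpos⟩ := ((hsmall.filter_mono nhdsWithin_le_nhds).and
    (self_mem_nhdsWithin : ∀ᶠ ρ in 𝓝[>] (0 : ℝ), 0 < ρ)).exists
  exact ⟨ρ, hpos, hρ⟩

section SeparatedBalls

variable {α : Type*} [PseudoMetricSpace α] {F : Set α} {c : α} {ρ r : ℝ}

theorem sphere_subset_closedBall_sdiff_iUnion_ball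
    (hsep : ∀ p ∈ F, ∀ q ∈ F, p ≠ q → 2 * ρ < dist p q) (hFr : F ⊆ ball c r) {p : α}
    (hp : p ∈ F) : sphere p ρ ⊆ closedBall c (r + ρ) \ ⋃ q ∈ F, ball q ρ := by
  intro w hw
  rw [mem_sphere] at hw
  refine ⟨?_, fun hwq => ?_⟩
  · have := dist_triangle w p c
    have := mem_ball.1 (hFr hp)
    rw [mem_closedBall]; linarith
  · obtain ⟨q, hq, hwq⟩ := mem_iUnion₂.1 hwq
    rw [mem_ball] at hwq
    rcases eq_or_ne p q with rfl | hpq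
    · linarith
    · have := dist_triangle_left p q w
      linarith [hsep p hp q hq hpq]

theorem sphere_center_subset_closedBall_sdiff_iUnion_ball (hFr : F ⊆ ball c r) :
    sphere c (r + ρ) ⊆ closedBall c (r + ρ) \ ⋃ q ∈ F, ball q ρ := by
  intro w hw
  refine ⟨sphere_subset_closedBall hw, fun hwq => ?_⟩
  obtain ⟨q, hq, hwq⟩ := mem_iUnion₂.1 hwq
  have := dist_triangle w q c
  linarith [mem_sphere.1 hw, mem_ball.1 hwq, mem_ball.1 (hFr hq)]

theorem closedBall_sdiff_singleton_subset_compl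
    (hsep : ∀ p ∈ F, ∀ q ∈ F, p ≠ q → 2 * ρ < dist p q) {p : α} (hp : p ∈ F) :
    closedBall p ρ \ {p} ⊆ Fᶜ := fun w hw hwF => by
  have := hsep p hp w hwF (Ne.symm hw.2)
  linarith [mem_closedBall'.1 hw.1, dist_nonneg (x := p) (y := w)]

end SeparatedBalls

theorem SubharmonicOn.exists_isMaxOn_compl_finset {u : ℂ → ℝ} {C : ℝ} {F : Finset ℂ}
    (h : SubharmonicOn u (F : Set ℂ)ᶜ) (hbd : ∀ w ∈ (F : Set ℂ)ᶜ, |u w| ≤ C) :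
    ∃ x ∈ (F : Set ℂ)ᶜ, IsMaxOn u (F : Set ℂ)ᶜ x := by
  obtain ⟨ρ, hρ, hsep⟩ := F.exists_pos_forall_two_mul_lt_dist
  obtain ⟨r, hr, hFr⟩ := F.finite_toSet.isBounded.subset_ball_lt 0 0
  have hKF : closedBall 0 (r + ρ) \ ⋃ q ∈ (F : Set ℂ), ball q ρ ⊆ (F : Set ℂ)ᶜ :=
    fun w hw hwF => hw.2 (mem_biUnion hwF (mem_ball_self hρ))
  have hsph := sphere_center_subset_closedBall_sdiff_iUnion_ball (ρ := ρ) hFr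
  obtain ⟨x, hxK, hmax⟩ := (h.1.mono hKF).exists_isMaxOn
    ((NormedSpace.sphere_nonempty.2 (by positivity)).mono hsph)
    ((isCompact_closedBall 0 _).diff (isOpen_biUnion fun _ _ => isOpen_ball))
  refine ⟨x, hKF hxK, fun z hz => ?_⟩
  by_cases hzR : z ∈ closedBall 0 (r + ρ)
  · by_cases hzq : ∃ q ∈ (F : Set ℂ), z ∈ ball q ρ
    · obtain ⟨q, hq, hzq⟩ := hzq
      exact h.le_of_forall_sphere_le_of_mem_ball hbd
        (closedBall_sdiff_singleton_subset_compl hsep hq)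
        (fun w hw => hmax (sphere_subset_closedBall_sdiff_iUnion_ball hsep hFr hq hw))
        ⟨hzq, fun hzq' => hz (mem_singleton_iff.1 hzq' ▸ hq)⟩
    · exact hmax ⟨hzR, fun hz' => hzq (by simpa using hz')⟩
  · exact h.le_of_forall_sphere_le_of_notMem_closedBall hbd (by positivity)
      (compl_subset_compl.2 (hFr.trans (ball_subset_ball (by linarith))))
      (fun w hw => hmax (hsph hw)) hzR

/-- **A bounded subharmonic function on the complement of a finite set in `ℂ` is
constant.** -/
theorem bounded_subharmonic_on_punctured_plane_constant
    (F : Finset ℂ) (u : ℂ → ℝ)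
    (hsub : SubharmonicOn u ((F : Set ℂ))ᶜ)
    (hbd : ∃ M : ℝ, ∀ z ∈ ((F : Set ℂ))ᶜ, |u z| ≤ M) :
    ∃ c : ℝ, ∀ z ∈ ((F : Set ℂ))ᶜ, u z = c := by
  obtain ⟨M, hM⟩ := hbd
  have hU : IsOpen (F : Set ℂ)ᶜ := F.finite_toSet.isClosed.isOpen_compl
  have hUc : IsPreconnected (F : Set ℂ)ᶜ :=
    (F.countable_toSet.isPathConnected_compl_of_one_lt_rank
      (Complex.rank_real_complex ▸ Nat.one_lt_ofNat)).isConnected.isPreconnected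
  obtain ⟨x, hx, hmax⟩ := hsub.exists_isMaxOn_compl_finset hM
  exact ⟨u x, hsub.eq_of_isMaxOn hU hUc hM hx hmax⟩
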